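/- Let n ≥ 1, γ > 0, d ≥ 0, let M : ℝ → ℝ^{n×n} and b : ℝ → ℝⁿ be continuous with M bounded, let x, ξ : ℝ → ℝⁿ be differentiable with x'(t) = M(t)x(t) + b(t), ξ'(t) = M(t)ξ(t) + b(t), ξ(0) = 0, and let Φ : ℝ → ℝ^{n×n} be differentiable with Φ'(t) = M(t)Φ(t), Φ(0) = Iₙ. Define g(t) = x(t−d) − ξ(t−d), P(t) = det(Φ(t−d)), R(t) = adj(Φ(t−d))·g(t). Let ê : [0,∞) → ℝⁿ be differentiable with ê'(t) = −γ·P(t)·(P(t)·ê(t) − R(t)) and w : [0,∞) → ℝ differentiable with w'(t) = −γ·P(t)²·w(t), w(0) = 1. Then for every t ≥ 0 with w(t) < 1, the state estimate x̂(t) = ξ(t) + Φ(t)·(ê(t) − w(t)·ê(0))/(1 − w(t)) satisfies x̂(t) = x(t). -/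

import Mathlib

open Matrix

/-!
The error `x - ξ` solves `e' = M e` with `e(0) = x(0)`, so by uniqueness of solutions of this
globally Lipschitz linear system `x - ξ = Φ x(0)`. Since `adj Φ · Φ = det Φ · I`, the regression
is then exact: `R = P x(0)`. Consequently both `ê - x(0)` and `w (ê(0) - x(0))` solve the scalar
linear equation `q' = -γ P² q` and agree at `t = 0`, so they agree for all `t ≥ 0`; solving
`ê(t) - x(0) = w(t) (ê(0) - x(0))` for `x(0)` is possible exactly when `w(t) ≠ 1`.
-/

section LinearODE

variable {ι : Type*} [Fintype ι]

theorem Matrix.norm_mulVec_le_of_abs_le {A : Matrix ι ι ℝ} {C : ℝ} (hA : ∀ i j, |A i j| ≤ C)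
    (v : ι → ℝ) : ‖A *ᵥ v‖ ≤ Fintype.card ι * C * ‖v‖ := by
  rcases isEmpty_or_nonempty ι with hι | ⟨⟨i₀⟩⟩
  · simp [Subsingleton.elim (A *ᵥ v) 0]
  have hC : 0 ≤ C := (abs_nonneg _).trans (hA i₀ i₀)
  refine (pi_norm_le_iff_of_nonneg (by positivity)).2 fun i => ?_
  calc ‖(A *ᵥ v) i‖ = |∑ j, A i j * v j| := rfl
    _ ≤ ∑ j, |A i j| * |v j| := by
        simpa only [abs_mul] using Finset.abs_sum_le_sum_abs (fun j => A i j * v j) .univ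
    _ ≤ ∑ _j : ι, C * ‖v‖ :=
        Finset.sum_le_sum fun j _ => mul_le_mul (hA i j) (norm_le_pi_norm v j) (abs_nonneg _) hC
    _ = Fintype.card ι * C * ‖v‖ := by simp [mul_assoc]

theorem Matrix.lipschitzWith_mulVec_of_abs_le {A : Matrix ι ι ℝ} {C : ℝ}
    (hA : ∀ i j, |A i j| ≤ C) :
    LipschitzWith (Real.toNNReal (Fintype.card ι * C)) (A *ᵥ ·) :=
  AddMonoidHomClass.lipschitz_of_bound A.mulVecLin _ (norm_mulVec_le_of_abs_le hA)

theorem hasDerivAt_mulVec_of_hasDerivAt_apply {m : Type*} {Φ : ℝ → Matrix m ι ℝ}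
    {Φ' : Matrix m ι ℝ} {t : ℝ} (hΦ : ∀ i j, HasDerivAt (fun s => Φ s i j) (Φ' i j) t) (v : ι → ℝ) :
    HasDerivAt (fun s => Φ s *ᵥ v) (Φ' *ᵥ v) t :=
  hasDerivAt_pi.2 fun i => HasDerivAt.fun_sum fun j _ => (hΦ i j).mul_const (v j)

theorem eq_fundamental_mulVec_of_hasDerivAt [DecidableEq ι] {M Φ : ℝ → Matrix ι ι ℝ}
    {e : ℝ → ι → ℝ} (hM : ∃ C : ℝ, ∀ (t : ℝ) (i j : ι), |M t i j| ≤ C)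
    (hΦ : ∀ (i j : ι) (t : ℝ), HasDerivAt (fun s => Φ s i j) ((M t * Φ t) i j) t)
    (hΦ0 : Φ 0 = 1) (he : ∀ t, HasDerivAt e (M t *ᵥ e t) t) (t : ℝ) :
    e t = Φ t *ᵥ e 0 := by
  obtain ⟨C, hC⟩ := hM
  have hΦe : ∀ t, HasDerivAt (fun s => Φ s *ᵥ e 0) (M t *ᵥ (Φ t *ᵥ e 0)) t := fun t => by
    simpa only [mulVec_mulVec] using hasDerivAt_mulVec_of_hasDerivAt_apply (hΦ · · t) (e 0)
  refine congrFun (ODE_solution_unique_univ (v := fun t y => M t *ᵥ y) (s := fun _ => Set.univ)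
    (fun t => (lipschitzWith_mulVec_of_abs_le (hC t)).lipschitzOnWith)
    (fun t => ⟨he t, trivial⟩) (fun t => ⟨hΦe t, trivial⟩) (t₀ := 0) ?_) t
  simp [hΦ0]

end LinearODE

theorem eq_zero_of_hasDerivAt_neg_smul {E : Type*} [NormedAddCommGroup E] [NormedSpace ℝ E]
    {a : ℝ → ℝ} {q : ℝ → E} (ha : Continuous a)
    (hq : ∀ t ≥ (0 : ℝ), HasDerivAt q (-a t • q t) t) (hq0 : q 0 = 0) {t : ℝ} (ht : 0 ≤ t) :
    q t = 0 := by
  set F : ℝ → ℝ := fun t => ∫ s in (0 : ℝ)..t, a s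
  -- the integrating factor `exp F` turns `q' = -a q` into `(exp F • q)' = 0`
  have hG : ∀ s ≥ (0 : ℝ), HasDerivAt (fun u => Real.exp (F u) • q u) 0 s := fun s hs => by
    have hF : HasDerivAt F (a s) s := (ha.integral_hasStrictDerivAt 0 s).hasDerivAt
    refine (hF.exp.smul (hq s hs)).congr_deriv ?_
    module
  have hconst := constant_of_has_deriv_right_zero
    (fun s hs => (hG s hs.1).continuousAt.continuousWithinAt)
    (fun s hs => (hG s hs.1).hasDerivWithinAt) t ⟨ht, le_rfl⟩
  simpa [hq0, Real.exp_ne_zero] using hconst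

theorem gpebo_finite_time_state_observer_general {n : ℕ} (γ d : ℝ)
    (M : ℝ → Matrix (Fin n) (Fin n) ℝ) (b : ℝ → Fin n → ℝ)
    (hMbdd : ∃ C : ℝ, ∀ (t : ℝ) (i j : Fin n), |M t i j| ≤ C)
    (x ξ : ℝ → Fin n → ℝ)
    (hx : ∀ t : ℝ, HasDerivAt x ((M t).mulVec (x t) + b t) t)
    (hξ : ∀ t : ℝ, HasDerivAt ξ ((M t).mulVec (ξ t) + b t) t)
    (hξ0 : ξ 0 = 0)
    (Φ : ℝ → Matrix (Fin n) (Fin n) ℝ)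
    (hΦ : ∀ (i j : Fin n) (t : ℝ), HasDerivAt (fun s => Φ s i j) ((M t * Φ t) i j) t)
    (hΦ0 : Φ 0 = 1)
    (g : ℝ → Fin n → ℝ) (hg : ∀ t : ℝ, g t = x (t - d) - ξ (t - d))
    (P : ℝ → ℝ) (hP : ∀ t : ℝ, P t = (Φ (t - d)).det)
    (R : ℝ → Fin n → ℝ) (hR : ∀ t : ℝ, R t = (Φ (t - d)).adjugate.mulVec (g t))
    (ehat : ℝ → Fin n → ℝ)
    (hehat : ∀ t ≥ (0:ℝ), HasDerivAt ehat (-(γ * P t) • (P t • ehat t - R t)) t)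
    (w : ℝ → ℝ)
    (hw : ∀ t ≥ (0:ℝ), HasDerivAt w (-γ * (P t) ^ 2 * w t) t) (hw0 : w 0 = 1) :
    ∀ t ≥ (0:ℝ), w t < 1 →
      ξ t + (Φ t).mulVec ((1 - w t)⁻¹ • (ehat t - w t • ehat 0)) = x t := by
  intro t ht hwt
  have herr : ∀ s, x s - ξ s = Φ s *ᵥ x 0 := by
    have he : ∀ u, HasDerivAt (fun s => x s - ξ s) (M u *ᵥ (x u - ξ u)) u := fun u =>
      ((hx u).sub (hξ u)).congr_deriv (by rw [mulVec_sub]; abel)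
    simpa [hξ0] using eq_fundamental_mulVec_of_hasDerivAt hMbdd hΦ hΦ0 he
  have hRP : ∀ s, R s = P s • x 0 := fun s => by
    rw [hR, hg, herr, mulVec_mulVec, adjugate_mul, hP, smul_mulVec, one_mulVec]
  have hPcont : Continuous P := by
    have hΦcont : Continuous Φ := continuous_pi fun i => continuous_pi fun j =>
      continuous_iff_continuousAt.2 fun s => (hΦ i j s).continuousAt
    rw [show P = _ from funext hP]
    exact (hΦcont.comp (continuous_sub_right d)).matrix_det
  have hdev := eq_zero_of_hasDerivAt_neg_smul (a := fun s => γ * P s ^ 2)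
    (q := fun s => ehat s - x 0 - w s • (ehat 0 - x 0)) (continuous_const.mul (hPcont.pow 2))
    (fun s hs => (((hehat s hs).sub_const (x 0)).sub
      ((hw s hs).smul_const (ehat 0 - x 0))).congr_deriv (by rw [hRP]; module))
    (by simp [hw0]) ht
  have hestim : ehat t - w t • ehat 0 = (1 - w t) • x 0 := by
    linear_combination (norm := module) hdev
  rw [hestim, inv_smul_smul₀ (sub_ne_zero.2 hwt.ne'), ← herr, add_sub_cancel]

/-- finite-time GPEBO state reconstruction under delayed
measurements: the plant `x' = M(t)x + b(t)` (with `M` continuous and bounded), its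
open-loop copy `ξ` with `ξ(0) = 0`, the fundamental matrix `Φ` (`Φ' = MΦ`,
`Φ(0) = I`), the delayed residual `g(t) = x(t-d) - ξ(t-d)`, the regression signals
`P(t) = det(Φ(t-d))`, `R(t) = adj(Φ(t-d))·g(t)`, the gradient estimate `ê` of the
initial condition (`ê' = -γP(Pê - R)`) and the auxiliary signal `w`
(`w' = -γP²w`, `w(0) = 1`): for every `t ≥ 0` with `w(t) < 1`, the state estimate
`x̂(t) = ξ(t) + Φ(t)·(ê(t) - w(t)ê(0))/(1 - w(t))` equals `x(t)` exactly. -/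
theorem gpebo_finite_time_state_observer {n : ℕ} (hn : 1 ≤ n) (γ d : ℝ)
    (hγ : 0 < γ) (hd : 0 ≤ d)
    (M : ℝ → Matrix (Fin n) (Fin n) ℝ) (b : ℝ → Fin n → ℝ)
    (hMcont : ∀ i j, Continuous fun t => M t i j) (hb : Continuous b)
    (hMbdd : ∃ C : ℝ, ∀ (t : ℝ) (i j : Fin n), |M t i j| ≤ C)
    (x ξ : ℝ → Fin n → ℝ)
    (hx : ∀ t : ℝ, HasDerivAt x ((M t).mulVec (x t) + b t) t)
    (hξ : ∀ t : ℝ, HasDerivAt ξ ((M t).mulVec (ξ t) + b t) t)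
    (hξ0 : ξ 0 = 0)
    (Φ : ℝ → Matrix (Fin n) (Fin n) ℝ)
    (hΦ : ∀ (i j : Fin n) (t : ℝ), HasDerivAt (fun s => Φ s i j) ((M t * Φ t) i j) t)
    (hΦ0 : Φ 0 = 1)
    (g : ℝ → Fin n → ℝ) (hg : ∀ t : ℝ, g t = x (t - d) - ξ (t - d))
    (P : ℝ → ℝ) (hP : ∀ t : ℝ, P t = (Φ (t - d)).det)
    (R : ℝ → Fin n → ℝ) (hR : ∀ t : ℝ, R t = (Φ (t - d)).adjugate.mulVec (g t))
    (ehat : ℝ → Fin n → ℝ)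
    (hehat : ∀ t ≥ (0:ℝ), HasDerivAt ehat (-(γ * P t) • (P t • ehat t - R t)) t)
    (w : ℝ → ℝ)
    (hw : ∀ t ≥ (0:ℝ), HasDerivAt w (-γ * (P t) ^ 2 * w t) t) (hw0 : w 0 = 1) :
    ∀ t ≥ (0:ℝ), w t < 1 →
      ξ t + (Φ t).mulVec ((1 - w t)⁻¹ • (ehat t - w t • ehat 0)) = x t :=
  gpebo_finite_time_state_observer_general γ d M b hMbdd x ξ hx hξ hξ0 Φ hΦ hΦ0 g hg P hP R hR ehat
    hehat w hw hw0
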